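/- Let N₁, N₂ be normal subgroups of groups G₁, G₂ respectively, and suppose every finite quotient of G₁/N₁ is a finite quotient of G₂/N₂ and vice versa. If both quotient groups are finitely generated and residually finite, then the profinite completions of G₁/N₁ and G₂/N₂ are isomorphic. -/

import Mathlib

open Function

/-- Index set: finite-index normal subgroups. -/
def FIN (G : Type) [Group G] : Type := {N : Subgroup G // N.Normal ∧ N.FiniteIndex}

instance FIN.group {G : Type} [Group G] (N : FIN G) : Group (G ⧸ N.1) :=
  @QuotientGroup.Quotient.group G _ N.1 N.2.1

instance {G : Type} [Group G] (N : FIN G) : TopologicalSpace (G ⧸ N.1) := ⊥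
instance {G : Type} [Group G] (N : FIN G) : DiscreteTopology (G ⧸ N.1) := ⟨rfl⟩
instance {G : Type} [Group G] (N : FIN G) : IsTopologicalGroup (G ⧸ N.1) where
  continuous_mul := continuous_of_discreteTopology
  continuous_inv := continuous_of_discreteTopology

/-- Transition homomorphisms of the inverse system of finite quotients. -/
def transMap {G : Type} [Group G] (N M : FIN G) (h : N.1 ≤ M.1) : G ⧸ N.1 →* G ⧸ M.1 :=
  by haveI := N.2.1; haveI := M.2.1; exact QuotientGroup.map N.1 M.1 (MonoidHom.id G) (fun _ hx => h hx)

/-- The compatible families, as a subgroup of the product of all finite quotients. -/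
def profiniteSG (G : Type) [Group G] : Subgroup (∀ N : FIN G, G ⧸ N.1) where
  carrier := {x | ∀ (N M : FIN G) (h : N.1 ≤ M.1), transMap N M h (x N) = x M}
  one_mem' := by intro N M h; simp
  mul_mem' := by intro a b ha hb N M h; rw [Pi.mul_apply, Pi.mul_apply, map_mul, ha N M h, hb N M h]
  inv_mem' := by intro a ha N M h; rw [Pi.inv_apply, Pi.inv_apply, map_inv, ha N M h]

/-- The profinite completion of a group `G`: the inverse limit of its finite quotients. -/
abbrev ProfiniteCompletion (G : Type) [Group G] : Type := ↥(profiniteSG G)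

/-- The canonical homomorphism from `G` to its profinite completion. -/
def toPC (G : Type) [Group G] : G →* ProfiniteCompletion G where
  toFun g := ⟨fun N => QuotientGroup.mk g, by
    intro N M h
    have h1 := N.2.1; have h2 := M.2.1
    simp [transMap, QuotientGroup.map_mk]; rfl⟩
  map_one' := by apply Subtype.ext; funext N; rfl
  map_mul' := by intro a b; apply Subtype.ext; funext N; rfl

/-- A group is residually finite if nontrivial elements survive in some finite quotient. -/
def ResiduallyFinite (G : Type) [Group G] : Prop :=
  ∀ g : G, g ≠ 1 → ∃ N : Subgroup G, N.Normal ∧ N.FiniteIndex ∧ g ∉ N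

/-- Two groups have the same finite quotients. -/
def SameFiniteQuotients (G H : Type) [Group G] [Group H] : Prop :=
  ∀ (Q : Type) [Group Q] [Finite Q],
    (∃ f : G →* Q, Function.Surjective f) ↔ (∃ f : H →* Q, Function.Surjective f)

section Aux

open QuotientGroup Subgroup

variable {A : Type} [Group A]

/-- Intersection of all normal subgroups of index at most `n`. -/
def Kcore (A : Type) [Group A] (n : ℕ) : Subgroup A :=
  ⨅ N : {N : Subgroup A // N.Normal ∧ N.FiniteIndex ∧ N.index ≤ n}, N.1

lemma mem_Kcore_iff {n : ℕ} {a : A} :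
    a ∈ Kcore A n ↔ ∀ N : Subgroup A, N.Normal → N.FiniteIndex → N.index ≤ n → a ∈ N := by
  simp only [Kcore, Subgroup.mem_iInf, Subtype.forall]
  exact ⟨fun h N h1 h2 h3 => h N ⟨h1, h2, h3⟩, fun h N hN => h N hN.1 hN.2.1 hN.2.2⟩

lemma Kcore_le {n : ℕ} {N : Subgroup A} (h1 : N.Normal) (h2 : N.FiniteIndex)
    (h3 : N.index ≤ n) : Kcore A n ≤ N :=
  fun _ ha => (mem_Kcore_iff.mp ha) N h1 h2 h3

lemma Kcore_antitone {n m : ℕ} (h : n ≤ m) : Kcore A m ≤ Kcore A n := by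
  intro a ha
  rw [mem_Kcore_iff] at ha ⊢
  exact fun N h1 h2 h3 => ha N h1 h2 (h3.trans h)

instance Kcore_normal (n : ℕ) : (Kcore A n).Normal := by
  constructor
  intro a ha g
  rw [mem_Kcore_iff] at ha ⊢
  exact fun N h1 h2 h3 => h1.conj_mem a (ha N h1 h2 h3) g

lemma finite_monoidHom (P : Type) [Monoid P] [Finite P] [Group.FG A] : Finite (A →* P) := by
  obtain ⟨S, hS, hfin⟩ := Group.fg_iff.mp ‹Group.FG A›
  haveI : Finite S := hfin
  have : Function.Injective (fun (f : A →* P) (x : S) => f x.1) := by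
    intro f g h
    apply MonoidHom.eq_of_eqOn_top
    rw [← hS]
    apply MonoidHom.eqOn_closure
    intro x hx
    exact congrFun h ⟨x, hx⟩
  exact Finite.of_injective _ this

lemma finite_normal_le_index (n : ℕ) [Group.FG A] :
    Finite {N : Subgroup A // N.Normal ∧ N.FiniteIndex ∧ N.index ≤ n} := by
  haveI : Finite (A →* Equiv.Perm (Fin n)) := finite_monoidHom _
  have key : ∀ N : {N : Subgroup A // N.Normal ∧ N.FiniteIndex ∧ N.index ≤ n},
      ∃ (φ : A →* Equiv.Perm (Fin n)) (p : Fin n), ∀ g, g ∈ N.1 ↔ φ g p = p := by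
    rintro ⟨N, hN, hfi, hle⟩
    haveI : Finite (A ⧸ N) := Nat.finite_of_card_ne_zero hfi.index_ne_zero
    haveI : Fintype (A ⧸ N) := Fintype.ofFinite _
    have hcard : Fintype.card (A ⧸ N) ≤ n := by
      rwa [← Nat.card_eq_fintype_card]
    let e : A ⧸ N ≃ Fin (Fintype.card (A ⧸ N)) := Fintype.equivFin _
    let emb : A ⧸ N ↪ Fin n := e.toEmbedding.trans (Fin.castLEEmb hcard)
    have hmem : ∀ g : A, (g ∈ N ↔ g • ((1 : A) : A ⧸ N) = ((1 : A) : A ⧸ N)) := by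
      intro g
      rw [← MulAction.mem_stabilizer_iff, MulAction.stabilizer_quotient N]
    refine ⟨(Equiv.Perm.viaEmbeddingHom emb).comp (MulAction.toPermHom A (A ⧸ N)),
      emb ((1 : A) : A ⧸ N), fun g => ?_⟩
    have happ : ((Equiv.Perm.viaEmbeddingHom emb).comp (MulAction.toPermHom A (A ⧸ N)) g)
        (emb ((1 : A) : A ⧸ N)) = emb (g • ((1 : A) : A ⧸ N)) := by
      rw [MonoidHom.comp_apply, Equiv.Perm.viaEmbeddingHom_apply,
        Equiv.Perm.viaEmbedding_apply]
      rfl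
    show g ∈ N ↔ _
    rw [happ, hmem g]
    exact ⟨congrArg emb, fun h => emb.injective h⟩
  choose φ p hφ using key
  apply Finite.of_injective (fun N => (φ N, p N))
  intro N M h
  rw [Prod.mk.injEq] at h
  apply Subtype.ext
  ext g
  rw [hφ N g, hφ M g, h.1, h.2]

instance Kcore_finiteIndex [Group.FG A] (n : ℕ) : (Kcore A n).FiniteIndex := by
  haveI := finite_normal_le_index (A := A) n
  exact Subgroup.finiteIndex_iInf fun N => N.2.2.1

instance finite_Kcore_quotient [Group.FG A] (n : ℕ) : Finite (A ⧸ Kcore A n) :=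
  Nat.finite_of_card_ne_zero (Kcore_finiteIndex (A := A) n).index_ne_zero

end Aux
section Aux2

open QuotientGroup Subgroup Function

variable {A B : Type} [Group A] [Group B]

/-- The `Kcore` as an element of `FIN`. -/
def KF (A : Type) [Group A] [Group.FG A] (n : ℕ) : FIN A :=
  ⟨Kcore A n, Kcore_normal n, Kcore_finiteIndex n⟩

lemma transMap_mk (N M : FIN A) (h : N.1 ≤ M.1) (a : A) :
    transMap N M h (QuotientGroup.mk a) = QuotientGroup.mk a := rfl

lemma transMap_transMap (N M P : FIN A) (h1 : N.1 ≤ M.1) (h2 : M.1 ≤ P.1) (x : A ⧸ N.1) :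
    transMap M P h2 (transMap N M h1 x) = transMap N P (h1.trans h2) x := by
  induction x using QuotientGroup.induction_on
  rfl

lemma transMap_surjective (N M : FIN A) (h : N.1 ≤ M.1) :
    Function.Surjective (transMap N M h) := by
  intro x
  induction x using QuotientGroup.induction_on with
  | H a => exact ⟨QuotientGroup.mk a, rfl⟩

lemma map_Kcore (f : A →* B) (hf : Surjective f) (n : ℕ) (hker : f.ker ≤ Kcore A n) :
    Subgroup.map f (Kcore A n) = Kcore B n := by
  apply le_antisymm
  · rintro x ⟨a, ha, rfl⟩
    rw [mem_Kcore_iff]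
    intro M h1 h2 h3
    have hle : Kcore A n ≤ Subgroup.comap f M :=
      Kcore_le (h1.comap f) ⟨by rw [index_comap_of_surjective _ hf]; exact h2.index_ne_zero⟩
        (by rw [index_comap_of_surjective _ hf]; exact h3)
    exact hle ha
  · intro x hx
    obtain ⟨a, rfl⟩ := hf x
    refine ⟨a, ?_, rfl⟩
    show a ∈ Kcore A n
    rw [mem_Kcore_iff]
    intro N h1 h2 h3
    have hcm : Subgroup.comap f (Subgroup.map f N) = N := by
      rw [Subgroup.comap_map_eq, sup_eq_left]
      exact hker.trans (Kcore_le h1 h2 h3)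
    have hidx : (Subgroup.map f N).index = N.index := by
      rw [← index_comap_of_surjective _ hf, hcm]
    have hmapN : Kcore B n ≤ Subgroup.map f N :=
      Kcore_le (h1.map f hf) ⟨by rw [hidx]; exact h2.index_ne_zero⟩ (by rw [hidx]; exact h3)
    obtain ⟨a', ha', haa⟩ := hmapN hx
    have hk : a'⁻¹ * a ∈ f.ker := by
      rw [MonoidHom.mem_ker, map_mul, map_inv, haa, inv_mul_cancel]
    have : a = a' * (a'⁻¹ * a) := by group
    rw [this]
    exact N.mul_mem ha' (Kcore_le h1 h2 h3 (hker hk))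

lemma Kcore_quot_bot [Group.FG A] (n : ℕ) : Kcore (A ⧸ Kcore A n) n = ⊥ := by
  rw [← map_Kcore (QuotientGroup.mk' (Kcore A n)) (mk'_surjective _) n
    (by rw [ker_mk'])]
  rw [eq_bot_iff]
  rintro x ⟨a, ha, rfl⟩
  simpa only [Subgroup.mem_bot, mk'_apply, QuotientGroup.eq_one_iff, SetLike.mem_coe] using ha

lemma Kcore_le_comap {Q : Type} [Group Q] (f : A →* Q) (hf : Surjective f) (n : ℕ) :
    Kcore A n ≤ Subgroup.comap f (Kcore Q n) := by
  intro a ha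
  rw [Subgroup.mem_comap, mem_Kcore_iff]
  intro M h1 h2 h3
  exact Kcore_le (h1.comap f) ⟨by rw [index_comap_of_surjective _ hf]; exact h2.index_ne_zero⟩
    (by rw [index_comap_of_surjective _ hf]; exact h3) ha


lemma exists_level_surj [Group.FG A] (hsame : SameFiniteQuotients A B) (n : ℕ) :
    ∃ g : (B ⧸ Kcore B n) →* (A ⧸ Kcore A n), Surjective g := by
  obtain ⟨f, hf⟩ := (hsame (A ⧸ Kcore A n)).mp ⟨QuotientGroup.mk' _, mk'_surjective _⟩
  have hker : Kcore B n ≤ f.ker := by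
    have h1 := Kcore_le_comap f hf n
    rwa [Kcore_quot_bot, MonoidHom.comap_bot] at h1
  refine ⟨QuotientGroup.lift (Kcore B n) f hker, ?_⟩
  intro q
  obtain ⟨b, rfl⟩ := hf q
  exact ⟨QuotientGroup.mk b, QuotientGroup.lift_mk' _ hker b⟩

lemma SameFiniteQuotients.symm' (h : SameFiniteQuotients A B) : SameFiniteQuotients B A :=
  fun Q _ _ => (h Q).symm

lemma nonempty_level_iso [Group.FG A] [Group.FG B] (hsame : SameFiniteQuotients A B) (n : ℕ) :
    Nonempty ((A ⧸ Kcore A n) ≃* (B ⧸ Kcore B n)) := by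
  obtain ⟨u, hu⟩ := exists_level_surj hsame n
  obtain ⟨v, hv⟩ := exists_level_surj hsame.symm' n
  have hcard : Nat.card (A ⧸ Kcore A n) = Nat.card (B ⧸ Kcore B n) :=
    le_antisymm (Nat.card_le_card_of_surjective u hu) (Nat.card_le_card_of_surjective v hv)
  exact ⟨MulEquiv.ofBijective v ((Nat.bijective_iff_surjective_and_card v).mpr ⟨hv, hcard⟩)⟩

end Aux2
section Aux3

open QuotientGroup Subgroup Function CategoryTheory

variable {A B : Type} [Group A] [Group B]

lemma transMap_refl {N : FIN A} (h : N.1 ≤ N.1) (x : A ⧸ N.1) : transMap N N h x = x := by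
  induction x using QuotientGroup.induction_on with
  | H a => rfl

lemma level_iso_ext {k : ℕ} (ρ ρ' : (A ⧸ Kcore A k) ≃* (B ⧸ Kcore B k))
    (h : ∀ a : A, ρ (QuotientGroup.mk a) = ρ' (QuotientGroup.mk a)) : ρ = ρ' := by
  apply MulEquiv.ext
  intro x
  induction x using QuotientGroup.induction_on with
  | H a => exact h a

set_option maxHeartbeats 1000000 in
lemma exists_compatible_family [Group.FG A] [Group.FG B] (hsame : SameFiniteQuotients A B) :
    ∃ σ : ∀ n : ℕ, (A ⧸ Kcore A n) ≃* (B ⧸ Kcore B n),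
      ∀ (n m : ℕ) (h : n ≤ m) (a : A),
        σ n (QuotientGroup.mk a)
          = transMap (KF B m) (KF B n) (Kcore_antitone h) (σ m (QuotientGroup.mk a)) := by
  have hc : ∀ k, Nat.card (A ⧸ Kcore A k) = Nat.card (B ⧸ Kcore B k) := fun k =>
    Nat.card_congr (nonempty_level_iso hsame k).some.toEquiv
  -- restriction of a level-`m` isomorphism to level `n ≤ m`
  have hres : ∀ (n m : ℕ) (hnm : n ≤ m), ∀ σ : (A ⧸ Kcore A m) ≃* (B ⧸ Kcore B m),
      ∃ ρ : (A ⧸ Kcore A n) ≃* (B ⧸ Kcore B n), ∀ a : A,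
        ρ (QuotientGroup.mk a)
          = transMap (KF B m) (KF B n) (Kcore_antitone hnm) (σ (QuotientGroup.mk a)) := by
    intro n m h σ
    have hAB : Kcore A m ≤ Kcore A n := Kcore_antitone h
    have hBB : Kcore B m ≤ Kcore B n := Kcore_antitone h
    set ψ : A →* (B ⧸ Kcore B n) :=
      ((transMap (KF B m) (KF B n) hBB).comp σ.toMonoidHom).comp
        (QuotientGroup.mk' (Kcore A m)) with hψdef
    have hmapA : Subgroup.map (QuotientGroup.mk' (Kcore A m)) (Kcore A n)
        = Kcore (A ⧸ Kcore A m) n :=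
      map_Kcore _ (mk'_surjective _) n (by rw [ker_mk']; exact hAB)
    have hmapB : Subgroup.map (QuotientGroup.mk' (Kcore B m)) (Kcore B n)
        = Kcore (B ⧸ Kcore B m) n :=
      map_Kcore _ (mk'_surjective _) n (by rw [ker_mk']; exact hBB)
    have hmapσ : Subgroup.map σ.toMonoidHom (Kcore (A ⧸ Kcore A m) n)
        = Kcore (B ⧸ Kcore B m) n := by
      apply map_Kcore _ σ.surjective n
      intro x hx
      have hx1 : x = 1 := by
        have := MonoidHom.mem_ker.mp hx
        exact σ.injective (by simpa using this)
      rw [hx1]; exact one_mem _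
    have hψ : ∀ a : A, ψ a = transMap (KF B m) (KF B n) hBB (σ (QuotientGroup.mk a)) :=
      fun a => rfl
    have hker : Kcore A n ≤ ψ.ker := by
      intro a ha
      rw [MonoidHom.mem_ker, hψ]
      have h1 : σ (QuotientGroup.mk a) ∈ Kcore (B ⧸ Kcore B m) n := by
        rw [← hmapσ]
        exact ⟨QuotientGroup.mk a, by rw [← hmapA]; exact ⟨a, ha, rfl⟩, rfl⟩
      rw [← hmapB] at h1
      obtain ⟨b, hb, hba⟩ := h1
      rw [← hba]
      show transMap (KF B m) (KF B n) hBB (QuotientGroup.mk b) = 1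
      erw [transMap_mk]
      exact (QuotientGroup.eq_one_iff (N := Kcore B n) b).mpr hb
    set ρ₀ : (A ⧸ Kcore A n) →* (B ⧸ Kcore B n) := QuotientGroup.lift (Kcore A n) ψ hker
      with hρ₀
    have hρ₀mk : ∀ a : A, ρ₀ (QuotientGroup.mk a) = ψ a := fun a => rfl
    have hsurj : Surjective ρ₀ := by
      intro y
      induction y using QuotientGroup.induction_on with
      | H b =>
        obtain ⟨x, hx⟩ := σ.surjective (QuotientGroup.mk b)
        induction x using QuotientGroup.induction_on with
        | H a =>
          refine ⟨QuotientGroup.mk a, ?_⟩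
          rw [hρ₀mk, hψ, hx]
          exact transMap_mk _ _ _ b
    have hbij : Bijective ρ₀ :=
      (Nat.bijective_iff_surjective_and_card ρ₀).mpr ⟨hsurj, hc n⟩
    exact ⟨MulEquiv.ofBijective ρ₀ hbij, fun a => by
      show ρ₀ (QuotientGroup.mk a) = _
      rw [hρ₀mk, hψ]⟩
  choose res hresspec using hres
  -- the inverse system of level isomorphisms
  let F : ℕᵒᵖ ⥤ Type :=
    { obj := fun n => (A ⧸ Kcore A n.unop) ≃* (B ⧸ Kcore B n.unop)
      map := fun {X Y} f => TypeCat.ofHom (fun σ => res Y.unop X.unop (leOfHom f.unop) σ)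
      map_id := by
        intro X
        apply ConcreteCategory.hom_ext; intro σ
        change res X.unop X.unop _ σ = σ
        apply level_iso_ext
        intro a
        erw [hresspec X.unop X.unop (le_refl _) σ a, transMap_refl]
      map_comp := by
        intro X Y Z f g
        apply ConcreteCategory.hom_ext; intro σ
        apply level_iso_ext
        intro a
        show res Z.unop X.unop _ σ (QuotientGroup.mk a)
          = res Z.unop Y.unop _ (res Y.unop X.unop _ σ) (QuotientGroup.mk a)
        erw [hresspec, hresspec, hresspec, transMap_transMap] }
  haveI hFin : ∀ j : ℕᵒᵖ, Finite (F.obj j) := by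
    intro j
    show Finite ((A ⧸ Kcore A j.unop) ≃* (B ⧸ Kcore B j.unop))
    exact Finite.of_injective (fun ρ => (ρ : (A ⧸ Kcore A j.unop) → (B ⧸ Kcore B j.unop)))
      DFunLike.coe_injective
  haveI hNe : ∀ j : ℕᵒᵖ, Nonempty (F.obj j) := fun j => nonempty_level_iso hsame j.unop
  obtain ⟨u, hu⟩ := nonempty_sections_of_finite_inverse_system F
  refine ⟨fun n => u (Opposite.op n), ?_⟩
  intro n m h a
  have h1 := hu (j := Opposite.op m) (j' := Opposite.op n) ((homOfLE h).op)
  have h2 : res n m h (u (Opposite.op m)) = u (Opposite.op n) := h1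
  show u (Opposite.op n) (QuotientGroup.mk a)
    = transMap (KF B m) (KF B n) (Kcore_antitone h) (u (Opposite.op m) (QuotientGroup.mk a))
  rw [← h2]
  exact hresspec n m h (u (Opposite.op m)) a

end Aux3
section Aux4

open QuotientGroup Subgroup Function

variable (A : Type) [Group A] [Group.FG A]

/-- The inverse limit over the cofinal system of `Kcore`s. -/
def lsg : Subgroup (∀ n : ℕ, A ⧸ (KF A n).1) where
  carrier := {y | ∀ (n m : ℕ) (h : n ≤ m),
    transMap (KF A m) (KF A n) (Kcore_antitone h) (y m) = y n}
  one_mem' := by intro n m h; simp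
  mul_mem' := by
    intro a b ha hb n m h
    rw [Pi.mul_apply, Pi.mul_apply, map_mul, ha n m h, hb n m h]
  inv_mem' := by intro a ha n m h; rw [Pi.inv_apply, Pi.inv_apply, map_inv, ha n m h]

lemma KindexLe (N : FIN A) : (KF A N.1.index).1 ≤ N.1 :=
  Kcore_le N.2.1 N.2.2 le_rfl

/-- `ProfiniteCompletion` to the limit over the cofinal system. -/
def pcToL : ProfiniteCompletion A →* ↥(lsg A) where
  toFun x := ⟨fun n => x.1 (KF A n), fun n m h => x.2 (KF A m) (KF A n) (Kcore_antitone h)⟩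
  map_one' := rfl
  map_mul' := fun _ _ => rfl

/-- The limit over the cofinal system back to `ProfiniteCompletion`. -/
noncomputable def lToPC : ↥(lsg A) →* ProfiniteCompletion A where
  toFun y := ⟨fun N => transMap (KF A N.1.index) N (KindexLe A N) (y.1 N.1.index), by
    intro N M h
    haveI : N.1.FiniteIndex := N.2.2
    have hmn : M.1.index ≤ N.1.index := Subgroup.index_antitone h
    show transMap N M h (transMap (KF A N.1.index) N (KindexLe A N) (y.1 N.1.index))
      = transMap (KF A M.1.index) M (KindexLe A M) (y.1 M.1.index)
    erw [transMap_transMap, ← y.2 M.1.index N.1.index hmn, transMap_transMap]⟩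
  map_one' := by
    apply Subtype.ext
    funext N
    show transMap (KF A N.1.index) N (KindexLe A N) ((1 : ∀ n : ℕ, A ⧸ (KF A n).1) _) = 1
    rw [Pi.one_apply, map_one]
  map_mul' := by
    intro a b
    apply Subtype.ext
    funext N
    show transMap _ _ _ ((a.1 * b.1) _) = _
    rw [Pi.mul_apply, map_mul]
    rfl

lemma lToPC_pcToL (x : ProfiniteCompletion A) : lToPC A (pcToL A x) = x :=
  Subtype.ext (funext fun N => x.2 (KF A N.1.index) N (KindexLe A N))

lemma pcToL_lToPC (y : ↥(lsg A)) : pcToL A (lToPC A y) = y := by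
  apply Subtype.ext
  funext n
  show transMap (KF A (KF A n).1.index) (KF A n) _ (y.1 (KF A n).1.index) = y.1 n
  set m := (KF A n).1.index with hm
  set p := max n m with hp
  have h1 : transMap (KF A p) (KF A m) (Kcore_antitone (le_max_right n m)) (y.1 p) = y.1 m :=
    y.2 m p (le_max_right n m)
  have h2 : transMap (KF A p) (KF A n) (Kcore_antitone (le_max_left n m)) (y.1 p) = y.1 n :=
    y.2 n p (le_max_left n m)
  erw [← h1, transMap_transMap]
  exact h2

variable {A}
variable {B : Type} [Group B] [Group.FG B]

/-- Map between the limits induced by a compatible family of level isomorphisms. -/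
def lsgMap (σ : ∀ n : ℕ, (A ⧸ Kcore A n) ≃* (B ⧸ Kcore B n))
    (hσ : ∀ (n m : ℕ) (h : n ≤ m) (x : A ⧸ (KF A m).1),
      σ n (transMap (KF A m) (KF A n) (Kcore_antitone h) x)
        = transMap (KF B m) (KF B n) (Kcore_antitone h) (σ m x)) :
    ↥(lsg A) →* ↥(lsg B) where
  toFun y := ⟨fun n => σ n (y.1 n), by
    intro n m h
    show transMap (KF B m) (KF B n) _ (σ m (y.1 m)) = σ n (y.1 n)
    rw [← hσ n m h, y.2 n m h]⟩
  map_one' := by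
    apply Subtype.ext
    funext n
    show σ n ((1 : ∀ k : ℕ, A ⧸ (KF A k).1) n) = 1
    erw [Pi.one_apply, map_one]
  map_mul' := by
    intro a b
    apply Subtype.ext
    funext n
    show σ n ((a.1 * b.1) n) = _
    erw [Pi.mul_apply, map_mul]
    rfl

lemma pc_continuous (f : ProfiniteCompletion A → ProfiniteCompletion B)
    (g : ∀ N : FIN B, (A ⧸ (KF A N.1.index).1) → (B ⧸ N.1))
    (hf : ∀ x N, (f x).1 N = g N (x.1 (KF A N.1.index))) : Continuous f := by
  apply continuous_induced_rng.2
  rw [show (Subtype.val ∘ f) = fun (x : ProfiniteCompletion A) (N : FIN B) =>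
      g N (x.1 (KF A N.1.index)) from funext fun x => funext fun N => hf x N]
  apply continuous_pi
  intro N
  exact (continuous_of_discreteTopology (f := g N)).comp
    ((continuous_apply (KF A N.1.index)).comp continuous_subtype_val)

end Aux4
/-- if the quotients `G₁/N₁` and `G₂/N₂` are finitely generated, residually
finite, and have the same finite quotients, then their profinite completions are isomorphic. -/
theorem stmt14 (G₁ G₂ : Type) [Group G₁] [Group G₂]
    (N₁ : Subgroup G₁) [N₁.Normal] (N₂ : Subgroup G₂) [N₂.Normal]
    (hfg₁ : Group.FG (G₁ ⧸ N₁)) (hfg₂ : Group.FG (G₂ ⧸ N₂))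
    (hrf₁ : ResiduallyFinite (G₁ ⧸ N₁)) (hrf₂ : ResiduallyFinite (G₂ ⧸ N₂))
    (hsame : SameFiniteQuotients (G₁ ⧸ N₁) (G₂ ⧸ N₂)) :
    ∃ e : ProfiniteCompletion (G₁ ⧸ N₁) ≃* ProfiniteCompletion (G₂ ⧸ N₂),
      Continuous e ∧ Continuous e.symm := by
  haveI := hfg₁
  haveI := hfg₂
  set A := G₁ ⧸ N₁ with hA
  set B := G₂ ⧸ N₂ with hB
  obtain ⟨σ, hcompat⟩ := exists_compatible_family hsame
  have hσ : ∀ (n m : ℕ) (h : n ≤ m) (x : A ⧸ (KF A m).1),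
      σ n (transMap (KF A m) (KF A n) (Kcore_antitone h) x)
        = transMap (KF B m) (KF B n) (Kcore_antitone h) (σ m x) := by
    intro n m h x
    induction x using QuotientGroup.induction_on with
    | H a => erw [transMap_mk]; exact hcompat n m h a
  have hτ : ∀ (n m : ℕ) (h : n ≤ m) (y : B ⧸ (KF B m).1),
      (σ n).symm (transMap (KF B m) (KF B n) (Kcore_antitone h) y)
        = transMap (KF A m) (KF A n) (Kcore_antitone h) ((σ m).symm y) := by
    intro n m h y
    have h1 := hσ n m h ((σ m).symm y)
    erw [MulEquiv.apply_symm_apply] at h1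
    erw [← h1, MulEquiv.symm_apply_apply]
  set Φ : ProfiniteCompletion A →* ProfiniteCompletion B :=
    (lToPC B).comp ((lsgMap σ hσ).comp (pcToL A)) with hΦdef
  set Ψ : ProfiniteCompletion B →* ProfiniteCompletion A :=
    (lToPC A).comp ((lsgMap (fun n => (σ n).symm) hτ).comp (pcToL B)) with hΨdef
  have hlsg1 : ∀ y, lsgMap (fun n => (σ n).symm) hτ (lsgMap σ hσ y) = y := by
    intro y
    apply Subtype.ext
    funext n
    show (σ n).symm (σ n (y.1 n)) = y.1 n
    exact MulEquiv.symm_apply_apply _ _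
  have hlsg2 : ∀ y, lsgMap σ hσ (lsgMap (fun n => (σ n).symm) hτ y) = y := by
    intro y
    apply Subtype.ext
    funext n
    show σ n ((σ n).symm (y.1 n)) = y.1 n
    exact MulEquiv.apply_symm_apply _ _
  have hΨΦ : ∀ x, Ψ (Φ x) = x := by
    intro x
    show lToPC A (lsgMap _ hτ (pcToL B (lToPC B (lsgMap σ hσ (pcToL A x))))) = x
    rw [pcToL_lToPC, hlsg1, lToPC_pcToL]
  have hΦΨ : ∀ x, Φ (Ψ x) = x := by
    intro x
    show lToPC B (lsgMap σ hσ (pcToL A (lToPC A (lsgMap _ hτ (pcToL B x))))) = x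
    rw [pcToL_lToPC, hlsg2, lToPC_pcToL]
  refine ⟨MulEquiv.mk ⟨⇑Φ, ⇑Ψ, hΨΦ, hΦΨ⟩ Φ.map_mul, ?_, ?_⟩
  · exact pc_continuous _ (fun (N : FIN B) z =>
      transMap (KF B N.1.index) N (KindexLe B N) (σ N.1.index z)) (fun x N => rfl)
  · exact pc_continuous _ (fun (N : FIN A) z =>
      transMap (KF A N.1.index) N (KindexLe A N) ((σ N.1.index).symm z)) (fun x N => rfl)
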